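/- Let f : [0, ∞) → [0, ∞) be integrable on [0, ∞) (not necessarily monotone). Let n ≥ 1 be an integer, κ ∈ ℝ, b > 0 and α ≥ 0. If lim_{x→∞} Tⁿ(f)(x) / (x^κ e^{−αx}) = b, then lim_{x→∞} T(f)(x) / (x^κ e^{−αx}) = α^{n−1} b. -/

import Mathlib

open MeasureTheory Filter Set Real

noncomputable section

/-- The iterated tail-integration operator: `Titer 0 f = f` and
`Titer (n+1) f x = ∫_x^∞ Titer n f u du`. -/
def Titer : ℕ → (ℝ → ℝ) → ℝ → ℝ
  | 0, f => f
  | n + 1, f => fun x => ∫ u in Set.Ioi x, Titer n f u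

/-!
For `g` antitone with tail `G x = ∫_x^∞ g`, one has `h g(x) ≤ G(x-h) - G(x)` and
`G(x) - G(x+h) ≤ h g(x)`. Dividing by `w(x) = x^κ e^{-αx}` and using `w(x+s)/w(x) → e^{-αs}`,
`G ~ c w` gives `limsup g/w ≤ c(e^{αh} - 1)/h` and `liminf g/w ≥ c(1 - e^{-αh})/h` for every
`h > 0`; letting `h → 0⁺` yields `g ~ α c w`. Every `Tᵏ f` with `k ≥ 1` is antitone, so this step
descends from `Tⁿ f` to `T f`. The intermediate iterates are integrable because `b ≠ 0`: the tail
integrals of a non-integrable antitone function are all `+∞` (the junk value `0` in Lean), which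
would make `Tⁿ f` vanish.
-/

open Topology

lemma tendsto_rpow_mul_exp_add_div (κ α s : ℝ) :
    Tendsto (fun x : ℝ => ((x + s) ^ κ * exp (-α * (x + s))) / (x ^ κ * exp (-α * x))) atTop
      (𝓝 (exp (-α * s))) := by
  have hbase : Tendsto (fun x : ℝ => (1 + s / x) ^ κ) atTop (𝓝 1) := by
    have h : Tendsto (fun x : ℝ => 1 + s / x) atTop (𝓝 1) := by
      simpa using ((tendsto_const_nhds (x := s)).div_atTop tendsto_id).const_add (1 : ℝ)
    simpa [Function.comp_def] using
      (continuousAt_rpow_const 1 κ (Or.inl one_ne_zero)).tendsto.comp h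
  have hlim := hbase.mul_const (exp (-α * s))
  rw [one_mul] at hlim
  refine hlim.congr' ?_
  filter_upwards [eventually_gt_atTop 0, eventually_gt_atTop (-s)] with x hx hxs
  rw [show 1 + s / x = (x + s) / x by field_simp, div_rpow (by linarith) hx.le,
    mul_add, exp_add]
  field_simp

lemma tendsto_exp_mul_sub_one_div (a : ℝ) :
    Tendsto (fun h : ℝ => (exp (a * h) - 1) / h) (𝓝[≠] 0) (𝓝 a) := by
  have hd : HasDerivAt (fun t : ℝ => exp (a * t)) a 0 := by
    simpa using ((hasDerivAt_id (0 : ℝ)).const_mul a).exp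
  refine (hasDerivAt_iff_tendsto_slope.mp hd).congr fun h => ?_
  simp [slope_def_field]

lemma tendsto_one_sub_exp_neg_mul_div (a : ℝ) :
    Tendsto (fun h : ℝ => (1 - exp (-a * h)) / h) (𝓝[≠] 0) (𝓝 a) := by
  have := (tendsto_exp_mul_sub_one_div (-a)).neg
  rw [neg_neg] at this
  refine this.congr fun h => ?_
  ring

lemma tendsto_comp_add_div_rpow_mul_exp {G : ℝ → ℝ} {κ α c : ℝ}
    (hG : Tendsto (fun x => G x / (x ^ κ * exp (-α * x))) atTop (𝓝 c)) (s : ℝ) :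
    Tendsto (fun x => G (x + s) / (x ^ κ * exp (-α * x))) atTop (𝓝 (c * exp (-α * s))) := by
  refine ((hG.comp (tendsto_atTop_add_const_right atTop s tendsto_id)).mul
    (tendsto_rpow_mul_exp_add_div κ α s)).congr' ?_
  filter_upwards [eventually_gt_atTop (-s)] with x hx
  have := (rpow_pos_of_pos (show 0 < x + s by linarith) κ).ne'
  simp only [Function.comp_apply, id]
  field_simp

section TailIntegral

variable {g : ℝ → ℝ} {a b κ α c : ℝ}

lemma integral_Ioi_sub_integral_Ioi_le (hg : AntitoneOn g (Ici 0)) (hgi : IntegrableOn g (Ici 0))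
    (ha : 0 ≤ a) (hab : a ≤ b) :
    (∫ u in Ioi a, g u) - ∫ u in Ioi b, g u ≤ (b - a) * g a := by
  have hsub : Icc a b ⊆ Ici 0 := fun u hu => ha.trans hu.1
  rw [intervalIntegral.integral_Ioi_sub_Ioi (hgi.mono_set (Ioi_subset_Ici ha)) hab,
    ← smul_eq_mul, ← intervalIntegral.integral_const]
  exact intervalIntegral.integral_mono_on hab (hg.mono (uIcc_of_le hab ▸ hsub)).intervalIntegrable
    intervalIntegrable_const fun u hu => hg ha (hsub hu) hu.1

lemma le_integral_Ioi_sub_integral_Ioi (hg : AntitoneOn g (Ici 0)) (hgi : IntegrableOn g (Ici 0))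
    (ha : 0 ≤ a) (hab : a ≤ b) :
    (b - a) * g b ≤ (∫ u in Ioi a, g u) - ∫ u in Ioi b, g u := by
  have hsub : Icc a b ⊆ Ici 0 := fun u hu => ha.trans hu.1
  rw [intervalIntegral.integral_Ioi_sub_Ioi (hgi.mono_set (Ioi_subset_Ici ha)) hab,
    ← smul_eq_mul, ← intervalIntegral.integral_const]
  exact intervalIntegral.integral_mono_on hab intervalIntegrable_const
    (hg.mono (uIcc_of_le hab ▸ hsub)).intervalIntegrable
    fun u hu => hg (hsub hu) (hsub (right_mem_Icc.2 hab)) hu.2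

lemma integral_Ioi_nonneg_of_nonneg (hg : ∀ x, 0 ≤ x → 0 ≤ g x) (ha : 0 ≤ a) :
    0 ≤ ∫ u in Ioi a, g u :=
  setIntegral_nonneg measurableSet_Ioi fun u hu => hg u (ha.trans (le_of_lt hu))

lemma antitoneOn_integral_Ioi (hg : ∀ x, 0 ≤ x → 0 ≤ g x) (hgi : IntegrableOn g (Ici 0)) :
    AntitoneOn (fun x => ∫ u in Ioi x, g u) (Ici 0) := by
  intro a ha b _ hab
  refine setIntegral_mono_set (hgi.mono_set (Ioi_subset_Ici ha)) ?_
    (Ioi_subset_Ioi hab).eventuallyLE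
  exact (ae_restrict_iff' measurableSet_Ioi).2
    (ae_of_all _ fun u hu => hg u (ha.trans (le_of_lt hu)))

lemma AntitoneOn.integral_Ioi_eq_zero_of_not_integrableOn (hg : AntitoneOn g (Ici 0))
    (hgi : ¬ IntegrableOn g (Ici 0)) (ha : 0 ≤ a) : ∫ u in Ioi a, g u = 0 := by
  refine integral_undef fun hint => hgi ?_
  have hIcc : IntegrableOn g (Icc 0 a) :=
    (hg.mono Icc_subset_Ici_self).integrableOn_isCompact isCompact_Icc
  rw [← Icc_union_Ioi_eq_Ici ha]
  exact hIcc.union hint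

lemma AntitoneOn.eventually_div_rpow_mul_exp_lt (hg : AntitoneOn g (Ici 0))
    (hgi : IntegrableOn g (Ici 0))
    (hG : Tendsto (fun x => (∫ u in Ioi x, g u) / (x ^ κ * exp (-α * x))) atTop (𝓝 c))
    {h r : ℝ} (hh : 0 < h) (hr : c * ((exp (α * h) - 1) / h) < r) :
    ∀ᶠ x in atTop, g x / (x ^ κ * exp (-α * x)) < r := by
  set G : ℝ → ℝ := fun x => ∫ u in Ioi x, g u
  set w : ℝ → ℝ := fun x => x ^ κ * exp (-α * x)
  have hlim : Tendsto (fun x => (G (x + -h) / w x - G x / w x) / h) atTop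
      (𝓝 (c * ((exp (α * h) - 1) / h))) := by
    convert ((tendsto_comp_add_div_rpow_mul_exp hG (-h)).sub hG).div_const h using 2
    ring_nf
  filter_upwards [hlim.eventually_lt_const hr, eventually_gt_atTop h] with x hxr hx
  have hw : 0 < w x := by
    have := rpow_pos_of_pos (hh.trans hx) κ
    positivity
  refine lt_of_le_of_lt ?_ hxr
  rw [← sub_div, div_right_comm, div_le_div_iff_of_pos_right hw, le_div_iff₀ hh]
  calc g x * h = (x - (x + -h)) * g x := by ring
    _ ≤ _ := le_integral_Ioi_sub_integral_Ioi hg hgi (by linarith) (by linarith)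

lemma AntitoneOn.eventually_lt_div_rpow_mul_exp (hg : AntitoneOn g (Ici 0))
    (hgi : IntegrableOn g (Ici 0))
    (hG : Tendsto (fun x => (∫ u in Ioi x, g u) / (x ^ κ * exp (-α * x))) atTop (𝓝 c))
    {h r : ℝ} (hh : 0 < h) (hr : r < c * ((1 - exp (-α * h)) / h)) :
    ∀ᶠ x in atTop, r < g x / (x ^ κ * exp (-α * x)) := by
  set G : ℝ → ℝ := fun x => ∫ u in Ioi x, g u
  set w : ℝ → ℝ := fun x => x ^ κ * exp (-α * x)
  have hlim : Tendsto (fun x => (G x / w x - G (x + h) / w x) / h) atTop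
      (𝓝 (c * ((1 - exp (-α * h)) / h))) := by
    convert (hG.sub (tendsto_comp_add_div_rpow_mul_exp hG h)).div_const h using 2
    ring
  filter_upwards [hlim.eventually_const_lt hr, eventually_gt_atTop 0] with x hxr hx
  have hw : 0 < w x := by
    have := rpow_pos_of_pos hx κ
    positivity
  refine hxr.trans_le ?_
  rw [← sub_div, div_right_comm, div_le_div_iff_of_pos_right hw, div_le_iff₀ hh]
  calc _ ≤ (x + h - x) * g x := integral_Ioi_sub_integral_Ioi_le hg hgi hx.le (by linarith)
    _ = g x * h := by ring

theorem AntitoneOn.tendsto_div_rpow_mul_exp_of_tendsto_integral_Ioi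
    (hg : AntitoneOn g (Ici 0)) (hgi : IntegrableOn g (Ici 0))
    (hG : Tendsto (fun x => (∫ u in Ioi x, g u) / (x ^ κ * exp (-α * x))) atTop (𝓝 c)) :
    Tendsto (fun x => g x / (x ^ κ * exp (-α * x))) atTop (𝓝 (α * c)) := by
  have hpos : 𝓝[>] (0 : ℝ) ≤ 𝓝[≠] 0 := nhdsWithin_mono _ fun _ h => ne_of_gt h
  have hU : Tendsto (fun h => c * ((exp (α * h) - 1) / h)) (𝓝[>] 0) (𝓝 (c * α)) :=
    ((tendsto_exp_mul_sub_one_div α).mono_left hpos).const_mul c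
  have hL : Tendsto (fun h => c * ((1 - exp (-α * h)) / h)) (𝓝[>] 0) (𝓝 (c * α)) :=
    ((tendsto_one_sub_exp_neg_mul_div α).mono_left hpos).const_mul c
  rw [Metric.tendsto_nhds]
  intro ε hε
  obtain ⟨h, ⟨hUh, hLh⟩, hh⟩ := ((hU.eventually (gt_mem_nhds (lt_add_of_pos_right _ hε))).and
    (hL.eventually (lt_mem_nhds (sub_lt_self _ hε)))).and self_mem_nhdsWithin |>.exists
  filter_upwards [hg.eventually_div_rpow_mul_exp_lt hgi hG hh hUh,
    hg.eventually_lt_div_rpow_mul_exp hgi hG hh hLh] with x hxU hxL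
  rw [Real.dist_eq, abs_sub_lt_iff]
  constructor <;> linarith

end TailIntegral

section Titer

variable {f : ℝ → ℝ}

lemma Titer_nonneg (hf : ∀ x, 0 ≤ x → 0 ≤ f x) : ∀ k x, 0 ≤ x → 0 ≤ Titer k f x
  | 0 => hf
  | k + 1 => fun _ hx => integral_Ioi_nonneg_of_nonneg (Titer_nonneg hf k) hx

lemma antitoneOn_Titer_succ (hf : ∀ x, 0 ≤ x → 0 ≤ f x) {k : ℕ}
    (hk : IntegrableOn (Titer k f) (Ici 0)) : AntitoneOn (Titer (k + 1) f) (Ici 0) :=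
  antitoneOn_integral_Ioi (Titer_nonneg hf k) hk

lemma Titer_eqOn_zero_of_le {k l : ℕ} (hk : EqOn (Titer k f) 0 (Ici 0)) (hkl : k ≤ l) :
    EqOn (Titer l f) 0 (Ici 0) := by
  induction l, hkl using Nat.le_induction with
  | base => exact hk
  | succ l _ ih =>
    intro x hx
    change ∫ u in Ioi x, Titer l f u = 0
    rw [setIntegral_congr_fun measurableSet_Ioi fun u hu => ih (mem_Ici.2 (hx.trans (le_of_lt hu)))]
    simp

variable {n : ℕ} {κ α b : ℝ}

lemma integrableOn_Titer_of_tendsto (hf : ∀ x, 0 ≤ x → 0 ≤ f x)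
    (hf_int : IntegrableOn f (Ici 0)) (hb : b ≠ 0)
    (hasym : Tendsto (fun x => Titer n f x / (x ^ κ * exp (-α * x))) atTop (𝓝 b)) :
    ∀ k < n, IntegrableOn (Titer k f) (Ici 0)
  | 0, _ => hf_int
  | k + 1, hk => by
    have hint := integrableOn_Titer_of_tendsto hf hf_int hb hasym k (by omega)
    by_contra hnot
    have hvanish : EqOn (Titer n f) 0 (Ici 0) := Titer_eqOn_zero_of_le (k := k + 2)
      (fun x hx => (antitoneOn_Titer_succ hf hint).integral_Ioi_eq_zero_of_not_integrableOn
        hnot hx) (by omega)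
    refine hb (tendsto_nhds_unique hasym (tendsto_const_nhds.congr' ?_))
    filter_upwards [eventually_ge_atTop 0] with x hx
    rw [hvanish hx, Pi.zero_apply, zero_div]

lemma tendsto_Titer_div_rpow_mul_exp (hf : ∀ x, 0 ≤ x → 0 ≤ f x)
    (hf_int : IntegrableOn f (Ici 0)) (hb : b ≠ 0)
    (hasym : Tendsto (fun x => Titer n f x / (x ^ κ * exp (-α * x))) atTop (𝓝 b))
    {k : ℕ} (hk : 1 ≤ k) (hkn : k ≤ n) :
    Tendsto (fun x => Titer k f x / (x ^ κ * exp (-α * x))) atTop (𝓝 (α ^ (n - k) * b)) := by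
  have hint := integrableOn_Titer_of_tendsto hf hf_int hb hasym
  refine Nat.decreasingInduction' (fun j hjn hkj ih => ?_) hkn (by simpa using hasym)
  obtain ⟨m, rfl⟩ : ∃ m, j = m + 1 := ⟨j - 1, by omega⟩
  convert (antitoneOn_Titer_succ hf (hint m (by omega))
    ).tendsto_div_rpow_mul_exp_of_tendsto_integral_Ioi (hint (m + 1) hjn) ih using 2
  rw [← mul_assoc, ← pow_succ']
  congr 2
  omega

end Titer

theorem stmt_15_general
    (f : ℝ → ℝ)
    (hf_nonneg : ∀ x, 0 ≤ x → 0 ≤ f x)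
    (hf_int : IntegrableOn f (Set.Ici 0))
    (n : ℕ) (hn : 1 ≤ n) (κ : ℝ) (b : ℝ) (hb : 0 < b) (α : ℝ)
    (hasym : Tendsto (fun x : ℝ => Titer n f x / (x ^ κ * Real.exp (-α * x)))
      atTop (nhds b)) :
    Tendsto (fun x : ℝ => Titer 1 f x / (x ^ κ * Real.exp (-α * x)))
      atTop (nhds (α ^ (n - 1) * b)) :=
  tendsto_Titer_div_rpow_mul_exp hf_nonneg hf_int hb.ne' hasym le_rfl hn

/-- second part of Lemma 6.1: for any nonnegative integrable `f`
(not necessarily monotone), `Tⁿ(f)(x) ~ b x^κ e^{-αx}` implies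
`T(f)(x) ~ α^{n-1} b x^κ e^{-αx}`. -/
theorem stmt_15
    (f : ℝ → ℝ)
    (hf_nonneg : ∀ x, 0 ≤ x → 0 ≤ f x)
    (hf_int : IntegrableOn f (Set.Ici 0))
    (n : ℕ) (hn : 1 ≤ n) (κ : ℝ) (b : ℝ) (hb : 0 < b) (α : ℝ) (hα : 0 ≤ α)
    (hasym : Tendsto (fun x : ℝ => Titer n f x / (x ^ κ * Real.exp (-α * x)))
      atTop (nhds b)) :
    Tendsto (fun x : ℝ => Titer 1 f x / (x ^ κ * Real.exp (-α * x)))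
      atTop (nhds (α ^ (n - 1) * b)) :=
  stmt_15_general f hf_nonneg hf_int n hn κ b hb α hasym
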